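/- arXiv:1112.1350 — 2 statements merged into one kernel-verified Lean document; each statement's English description precedes it below -/
import Mathlib

section
/- Let X be a compact topological space, D a dense subset of X, and N a compact subset of the space C(X, ℂ) of continuous complex-valued functions on X with the supremum norm. If g ∈ C(X, ℂ) satisfies inf_{f ∈ N} sup_{x ∈ X} |g(x) − f(x)| > ε, then there exists a finite subset F ⊆ D such that inf_{f ∈ N} max_{x ∈ F} |g(x) − f(x)| > ε. -/
/-! For a fixed point `x`, the condition `ε < ‖g x - f x‖` is open in `f`. For each `f ∈ N`
it holds at some point of `D`, since `‖g - f‖ > ε` makes it hold on a nonempty open subset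
of `X`. These open conditions, indexed by `D`, cover the compact set `N`, so finitely many
suffice. -/

namespace ContinuousMap

variable {X E : Type*} [TopologicalSpace X] [SeminormedAddCommGroup E]

theorem exists_lt_norm_apply [CompactSpace X] (f : C(X, E)) {ε : ℝ} (hε : 0 ≤ ε)
    (h : ε < ‖f‖) : ∃ x, ε < ‖f x‖ := by
  by_contra! hle
  exact ((f.norm_le hε).mpr hle).not_gt h

theorem exists_mem_lt_norm_apply_of_dense [CompactSpace X] {D : Set X} (hD : Dense D)
    (f : C(X, E)) {ε : ℝ} (hε : 0 ≤ ε) (h : ε < ‖f‖) : ∃ x ∈ D, ε < ‖f x‖ :=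
  hD.exists_mem_open (isOpen_lt continuous_const (map_continuous f).norm)
    (f.exists_lt_norm_apply hε h)

theorem isOpen_setOf_lt_norm_sub_apply (g : C(X, E)) (x : X) (ε : ℝ) :
    IsOpen {f : C(X, E) | ε < ‖g x - f x‖} :=
  isOpen_lt continuous_const (continuous_const.sub (continuous_eval_const x)).norm

end ContinuousMap

/-- Let `X` be compact, `D ⊆ X` dense and `N ⊆ C(X, ℂ)` compact.  If
`g ∈ C(X, ℂ)` is at distance `> ε` from `N` (in the sup norm), then there is a finite
set `F ⊆ D` witnessing this: every `f ∈ N` differs from `g` by more than `ε` at some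
point of `F`. -/
theorem statement2 {X : Type*} [TopologicalSpace X] [CompactSpace X]
    (D : Set X) (hD : Dense D) (N : Set C(X, ℂ)) (hN : IsCompact N)
    (g : C(X, ℂ)) (ε : ℝ) (hε : 0 < ε)
    (h : ∀ f ∈ N, ε < ‖g - f‖) :
    ∃ F : Finset X, ↑F ⊆ D ∧ ∀ f ∈ N, ∃ x ∈ F, ε < ‖g x - f x‖ := by
  have hcover : N ⊆ ⋃ x ∈ D, {f | ε < ‖g x - f x‖} := fun f hf ↦ by
    obtain ⟨x, hx, hfx⟩ :=
      (g - f).exists_mem_lt_norm_apply_of_dense hD hε.le (h f hf)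
    exact Set.mem_iUnion₂.mpr ⟨x, hx, hfx⟩
  obtain ⟨F, hFD, hF, hFcover⟩ :=
    hN.elim_finite_subcover_image (fun x _ ↦ g.isOpen_setOf_lt_norm_sub_apply x ε) hcover
  refine ⟨hF.toFinset, by simpa using hFD, fun f hf ↦ ?_⟩
  obtain ⟨x, hx, hfx⟩ := Set.mem_iUnion₂.mp (hFcover hf)
  exact ⟨x, hF.mem_toFinset.mpr hx, hfx⟩
end

section
/- Let G be a group (regarded as a discrete topological group). Assume there exist a finite subset F ⊆ G and ε > 0 such that for every n ≥ 1, every irreducible homomorphism σ : G → U(n) that is not constantly equal to the identity matrix, and every f ∈ P_σ, one has max_{x ∈ F} |f(x) − 1| ≥ ε. Then for every n ≥ 1 the set of equivalence classes of irreducible homomorphisms G → U(n) is finite. (This is the statement that if the trivial representation is isolated in the set of finite-dimensional irreducible representations of a discrete group in the Fell topology, then Ĝ_n is finite for all n.) -/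
open scoped ComplexInnerProductSpace

/-- The action of a unitary matrix on Euclidean space. -/
noncomputable def matAct {n : ℕ} (A : Matrix.unitaryGroup (Fin n) ℂ)
    (v : EuclideanSpace ℂ (Fin n)) : EuclideanSpace ℂ (Fin n) :=
  Matrix.toEuclideanLin (A : Matrix (Fin n) (Fin n) ℂ) v

/-- The coefficient function `g ↦ ⟪ρ(g)v, v⟫` of a finite-dimensional unitary
representation. -/
noncomputable def coeffFn {G : Type*} [Group G] {n : ℕ}
    (ρ : G →* Matrix.unitaryGroup (Fin n) ℂ) (v : EuclideanSpace ℂ (Fin n)) (g : G) : ℂ :=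
  ⟪matAct (ρ g) v, v⟫

/-- `P_ρ`: the set of all finite sums of coefficient functions of `ρ`. -/
def posTypeFns {G : Type*} [Group G] {n : ℕ}
    (ρ : G →* Matrix.unitaryGroup (Fin n) ℂ) : Set (G → ℂ) :=
  {f | ∃ (k : ℕ) (v : Fin k → EuclideanSpace ℂ (Fin n)),
    f = fun g => ∑ i, coeffFn ρ (v i) g}

/-- A finite-dimensional unitary representation is irreducible if the only invariant
subspaces are `⊥` and `⊤`. -/
def IsIrreducibleRep {G : Type*} [Group G] {n : ℕ}
    (ρ : G →* Matrix.unitaryGroup (Fin n) ℂ) : Prop :=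
  ∀ W : Submodule ℂ (EuclideanSpace ℂ (Fin n)),
    (∀ g : G, ∀ w ∈ W, matAct (ρ g) w ∈ W) → W = ⊥ ∨ W = ⊤

/-- Equivalence of finite-dimensional unitary representations, witnessed by a linear
isometric isomorphism intertwining them. -/
def RepEquiv {G : Type*} [Group G] {n m : ℕ}
    (ρ : G →* Matrix.unitaryGroup (Fin n) ℂ) (σ : G →* Matrix.unitaryGroup (Fin m) ℂ) : Prop :=
  ∃ M : EuclideanSpace ℂ (Fin n) ≃ₗᵢ[ℂ] EuclideanSpace ℂ (Fin m),
    ∀ (g : G) (v : EuclideanSpace ℂ (Fin n)), M (matAct (ρ g) v) = matAct (σ g) (M v)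

/-- The normalized character `g ↦ trace ρ(g) / n` of a representation `ρ : G → U(n)`. -/
noncomputable def normChar {G : Type*} [Group G] {n : ℕ}
    (ρ : G →* Matrix.unitaryGroup (Fin n) ℂ) (g : G) : ℂ :=
  (ρ g : Matrix (Fin n) (Fin n) ℂ).trace / n

open scoped Matrix Kronecker

/-!
Call `∑ x ∈ F, ‖π x v - v‖ ^ 2` the energy of a vector `v` in a unitary representation `π`.
For a nontrivial irreducible `π`, the isolation hypothesis applied to the coefficient function of
a unit vector `u` gives `ε ≤ |⟪π x u, u⟫ - 1| ≤ ‖π x u - u‖` for some `x ∈ F`, so the energy of `v`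
is at least `ε ^ 2 * ‖v‖ ^ 2`. Energy is additive along an orthogonal splitting into invariant
subspaces, so by complete reducibility the same bound holds in every finite-dimensional unitary
representation without nonzero invariant vectors.

Apply this to `G` acting on `n × n` matrices (with the Hilbert–Schmidt norm) by
`X ↦ τ(g) X σ(g)*`. Its invariant vectors are the intertwiners from `σ` to `τ`, so by Schur's
lemma there are none when `τ` is irreducible and not equivalent to `σ`; and the energy of the
identity matrix is `∑ x ∈ F, ‖τ x - σ x‖²`. Hence `σ ↦ (σ x)_{x ∈ F}` sends inequivalent
irreducible representations to points at mutual distance at least `ε √n` on a sphere of a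
finite-dimensional space, and only finitely many such points fit.
-/

lemma exists_finset_forall_exists_of_totallyBounded {α X : Type*} [PseudoMetricSpace X]
    {s : Set α} {r : α → α → Prop} (Φ : α → X) (hΦ : TotallyBounded (Φ '' s)) {δ : ℝ}
    (hδ : 0 < δ) (hsep : ∀ a ∈ s, ∀ b ∈ s, ¬ r a b → δ ≤ dist (Φ a) (Φ b)) :
    ∃ S : Finset α, ∀ a ∈ s, ∃ b ∈ S, r a b := by
  classical
  obtain ⟨t, hts, htfin, hcover⟩ := Metric.finite_approx_of_totallyBounded hΦ δ hδ
  lift t to Finset X using htfin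
  obtain ⟨S, hSs, rfl⟩ := Finset.subset_set_image_iff.1 hts
  refine ⟨S, fun a ha => ?_⟩
  obtain ⟨y, hy, hay⟩ := Set.mem_iUnion₂.1 (hcover ⟨a, ha, rfl⟩)
  obtain ⟨b, hbS, rfl⟩ := Finset.mem_image.1 hy
  exact ⟨b, hbS, by_contra fun hab => (hsep a ha b (hSs hbS) hab).not_gt (Metric.mem_ball.1 hay)⟩

noncomputable def unitaryGroupLinearIsometryEquiv (ι : Type*) [Fintype ι] [DecidableEq ι] :
    Matrix.unitaryGroup ι ℂ ≃* (EuclideanSpace ℂ ι ≃ₗᵢ[ℂ] EuclideanSpace ℂ ι) :=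
  (Unitary.mapEquiv (StarMulEquiv.ofClass (Matrix.toEuclideanCLM (n := ι) (𝕜 := ℂ)))).toMulEquiv
    |>.trans Unitary.linearIsometryEquiv

lemma unitaryGroupLinearIsometryEquiv_apply {ι : Type*} [Fintype ι] [DecidableEq ι]
    (A : Matrix.unitaryGroup ι ℂ) (v : EuclideanSpace ℂ ι) :
    unitaryGroupLinearIsometryEquiv ι A v = Matrix.toEuclideanCLM (n := ι) (𝕜 := ℂ) A v :=
  rfl

abbrev UnitaryRep (G E : Type*) [Group G] [NormedAddCommGroup E] [InnerProductSpace ℂ E] :=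
  G →* (E ≃ₗᵢ[ℂ] E)

namespace UnitaryRep

variable {G E E' : Type*} [Group G] [NormedAddCommGroup E] [InnerProductSpace ℂ E]
  [NormedAddCommGroup E'] [InnerProductSpace ℂ E']

def IsInvariant (π : UnitaryRep G E) (W : Submodule ℂ E) : Prop :=
  ∀ g, ∀ w ∈ W, π g w ∈ W

def IsIrreducible (π : UnitaryRep G E) : Prop :=
  ∀ W, π.IsInvariant W → W = ⊥ ∨ W = ⊤

def HasNoInvariantVectors (π : UnitaryRep G E) : Prop :=
  ∀ v, (∀ g, π g v = v) → v = 0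

def energy (π : UnitaryRep G E) (F : Finset G) (v : E) : ℝ :=
  ∑ x ∈ F, ‖π x v - v‖ ^ 2

lemma IsInvariant.orthogonal {π : UnitaryRep G E} {W : Submodule ℂ E} (hW : π.IsInvariant W) :
    π.IsInvariant Wᗮ := by
  intro g v hv w hw
  have hw' : w = π g (π g⁻¹ w) := by simp
  rw [hw', LinearIsometryEquiv.inner_map_map]
  exact hv _ (hW _ _ hw)

def restrict (π : UnitaryRep G E) (W : Submodule ℂ E) (hW : π.IsInvariant W) : UnitaryRep G W where
  toFun g :=
    { toFun w := ⟨π g w, hW g w w.2⟩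
      invFun w := ⟨π g⁻¹ w, hW g⁻¹ w w.2⟩
      map_add' _ _ := by ext; simp
      map_smul' _ _ := by ext; simp
      left_inv w := by ext; simp
      right_inv w := by ext; simp
      norm_map' w := (π g).norm_map w }
  map_one' := by ext; simp
  map_mul' _ _ := by ext; simp

def conj (π : UnitaryRep G E) (e : E ≃ₗᵢ[ℂ] E') : UnitaryRep G E' where
  toFun g := e.symm.trans ((π g).trans e)
  map_one' := by ext; simp
  map_mul' _ _ := by ext; simp

variable {π : UnitaryRep G E}

@[simp] lemma restrict_apply_coe {W : Submodule ℂ E} (hW : π.IsInvariant W) (g : G) (w : W) :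
    (π.restrict W hW g w : E) = π g w := rfl

@[simp] lemma conj_apply (e : E ≃ₗᵢ[ℂ] E') (g : G) (v : E') : π.conj e g v = e (π g (e.symm v)) :=
  rfl

lemma IsIrreducible.conj (hπ : π.IsIrreducible) (e : E ≃ₗᵢ[ℂ] E') : (π.conj e).IsIrreducible := by
  intro W hW
  let f : E →ₗ[ℂ] E' := e.toLinearEquiv
  have hW' : π.IsInvariant (W.comap f) := fun g w hw => by
    simpa [f] using hW g (e w) hw
  have hW_eq : (W.comap f).map f = W :=
    Submodule.map_comap_eq_of_surjective e.surjective W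
  rcases hπ _ hW' with h | h <;> rw [h] at hW_eq
  · exact .inl (by simpa using hW_eq.symm)
  · rw [Submodule.map_top, LinearMap.range_eq_top.2 e.surjective] at hW_eq
    exact .inr hW_eq.symm

lemma HasNoInvariantVectors.restrict (hπ : π.HasNoInvariantVectors) {W : Submodule ℂ E}
    (hW : π.IsInvariant W) : (π.restrict W hW).HasNoInvariantVectors := fun w hw =>
  Subtype.ext <| hπ w fun g => congr(($(hw g) : E))

lemma HasNoInvariantVectors.conj (hπ : π.HasNoInvariantVectors) (e : E ≃ₗᵢ[ℂ] E') :
    (π.conj e).HasNoInvariantVectors := fun v hv =>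
  e.symm.map_eq_zero_iff.1 <| hπ _ fun g => e.injective <| by simpa using hv g

lemma HasNoInvariantVectors.ne_one [Nontrivial E] (hπ : π.HasNoInvariantVectors) : π ≠ 1 := by
  rintro rfl
  obtain ⟨v, hv⟩ := exists_ne (0 : E)
  exact hv (hπ v fun _ => rfl)

variable (F : Finset G)

lemma energy_nonneg (v : E) : 0 ≤ π.energy F v := by
  unfold energy; positivity

lemma energy_smul (c : ℂ) (v : E) : π.energy F (c • v) = ‖c‖ ^ 2 * π.energy F v := by
  simp only [energy, Finset.mul_sum, map_smul, ← smul_sub, norm_smul, mul_pow]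

lemma energy_restrict {W : Submodule ℂ E} (hW : π.IsInvariant W) (w : W) :
    (π.restrict W hW).energy F w = π.energy F w := by
  simp [energy]

lemma energy_conj (e : E ≃ₗᵢ[ℂ] E') (v : E) : (π.conj e).energy F (e v) = π.energy F v := by
  simp [energy, ← map_sub]

lemma energy_add_of_mem_orthogonal {W : Submodule ℂ E} (hW : π.IsInvariant W) {v w : E}
    (hv : v ∈ W) (hw : w ∈ Wᗮ) : π.energy F (v + w) = π.energy F v + π.energy F w := by
  rw [energy, energy, energy, ← Finset.sum_add_distrib]
  refine Finset.sum_congr rfl fun x _ => ?_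
  have hsplit : π x (v + w) - (v + w) = (π x v - v) + (π x w - w) := by rw [map_add]; abel
  rw [hsplit, sq, sq, sq, norm_add_sq_eq_norm_sq_add_norm_sq_of_inner_eq_zero (𝕜 := ℂ)]
  exact Submodule.inner_right_of_mem_orthogonal (W.sub_mem (hW x v hv) hv)
    (Wᗮ.sub_mem (hW.orthogonal x w hw) hw)

end UnitaryRep

open UnitaryRep

section MatrixRep

variable {G : Type*} [Group G]

noncomputable def toUnitaryRep {ι : Type*} [Fintype ι] [DecidableEq ι]
    (σ : G →* Matrix.unitaryGroup ι ℂ) : UnitaryRep G (EuclideanSpace ℂ ι) :=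
  (unitaryGroupLinearIsometryEquiv ι).toMonoidHom.comp σ

@[simp] lemma toUnitaryRep_apply {ι : Type*} [Fintype ι] [DecidableEq ι]
    (σ : G →* Matrix.unitaryGroup ι ℂ) (g : G) :
    toUnitaryRep σ g = unitaryGroupLinearIsometryEquiv ι (σ g) :=
  rfl

lemma matAct_eq {n : ℕ} (A : Matrix.unitaryGroup (Fin n) ℂ)
    (v : EuclideanSpace ℂ (Fin n)) : matAct A v = unitaryGroupLinearIsometryEquiv (Fin n) A v :=
  rfl

lemma isIrreducibleRep_iff {n : ℕ} (σ : G →* Matrix.unitaryGroup (Fin n) ℂ) :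
    IsIrreducibleRep σ ↔ (toUnitaryRep σ).IsIrreducible :=
  Iff.rfl

end MatrixRep

def IsolatesTrivial {G : Type*} [Group G] (F : Finset G) (ε : ℝ) : Prop :=
  ∀ n : ℕ, 1 ≤ n → ∀ σ : G →* Matrix.unitaryGroup (Fin n) ℂ,
    IsIrreducibleRep σ → σ ≠ 1 → ∀ f ∈ posTypeFns σ, ∃ x ∈ F, ε ≤ ‖f x - 1‖

namespace IsolatesTrivial

variable {G : Type*} [Group G] {F : Finset G} {ε : ℝ}

lemma sq_le_energy (h : IsolatesTrivial F ε) (hε : 0 ≤ ε) {m : ℕ} (hm : 1 ≤ m)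
    {σ : G →* Matrix.unitaryGroup (Fin m) ℂ} (hσ : IsIrreducibleRep σ) (hσ1 : σ ≠ 1)
    {u : EuclideanSpace ℂ (Fin m)} (hu : ‖u‖ = 1) : ε ^ 2 ≤ (toUnitaryRep σ).energy F u := by
  obtain ⟨x, hxF, hx⟩ := h m hm σ hσ hσ1 _ ⟨1, fun _ => u, rfl⟩
  rw [Fin.sum_univ_one] at hx
  have hcoeff : coeffFn σ u x - 1 = ⟪toUnitaryRep σ x u - u, u⟫ := by
    simp [coeffFn, matAct_eq, inner_self_eq_norm_sq_to_K, hu]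
  have hdisp : ε ≤ ‖toUnitaryRep σ x u - u‖ := by
    refine hx.trans ?_
    rw [hcoeff]
    exact (norm_inner_le_norm _ _).trans_eq (by rw [hu, mul_one])
  calc ε ^ 2 ≤ ‖toUnitaryRep σ x u - u‖ ^ 2 := by gcongr
    _ ≤ (toUnitaryRep σ).energy F u :=
      Finset.single_le_sum (f := fun x => ‖toUnitaryRep σ x u - u‖ ^ 2)
        (fun _ _ => sq_nonneg _) hxF

lemma sq_mul_norm_sq_le_energy_of_isIrreducible (h : IsolatesTrivial F ε) (hε : 0 ≤ ε)
    {E : Type*} [NormedAddCommGroup E] [InnerProductSpace ℂ E] [FiniteDimensional ℂ E]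
    {π : UnitaryRep G E} (hπ : π.IsIrreducible) (hπ0 : π.HasNoInvariantVectors) (v : E) :
    ε ^ 2 * ‖v‖ ^ 2 ≤ π.energy F v := by
  rcases eq_or_ne v 0 with rfl | hv
  · simpa using energy_nonneg F 0
  have : Nontrivial E := ⟨⟨v, 0, hv⟩⟩
  let e := (stdOrthonormalBasis ℂ E).repr
  let σ := (unitaryGroupLinearIsometryEquiv _).symm.toMonoidHom.comp (π.conj e)
  have hσ : toUnitaryRep σ = π.conj e := by ext; simp [σ]
  have : Nontrivial (EuclideanSpace ℂ (Fin _)) := e.symm.toLinearEquiv.toEquiv.nontrivial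
  have hσ1 : σ ≠ 1 := by
    rintro hσ1
    refine (hπ0.conj e).ne_one ?_
    rw [← hσ, hσ1]
    ext; simp
  have hu : ‖(‖v‖⁻¹ : ℂ) • e v‖ = 1 := by simp [norm_smul, hv]
  have key := h.sq_le_energy hε Module.finrank_pos ((isIrreducibleRep_iff σ).2 (hσ ▸ hπ.conj e))
    hσ1 hu
  rw [hσ, energy_smul, energy_conj] at key
  have hvpos : 0 < ‖v‖ := norm_pos_iff.2 hv
  simp only [norm_inv, Complex.norm_real, norm_norm, inv_pow] at key
  rwa [le_inv_mul_iff₀ (by positivity), mul_comm] at key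

theorem sq_mul_norm_sq_le_energy (h : IsolatesTrivial F ε) (hε : 0 ≤ ε)
    {E : Type*} [NormedAddCommGroup E] [InnerProductSpace ℂ E] [FiniteDimensional ℂ E]
    {π : UnitaryRep G E} (hπ0 : π.HasNoInvariantVectors) (v : E) :
    ε ^ 2 * ‖v‖ ^ 2 ≤ π.energy F v := by
  induction hd : Module.finrank ℂ E using Nat.strong_induction_on generalizing E with
  | _ d ih =>
  by_cases hπ : π.IsIrreducible
  · exact h.sq_mul_norm_sq_le_energy_of_isIrreducible hε hπ hπ0 v
  obtain ⟨W, hW, hW_bot, hW_top⟩ : ∃ W, π.IsInvariant W ∧ W ≠ ⊥ ∧ W ≠ ⊤ := by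
    simpa [UnitaryRep.IsIrreducible, not_or] using hπ
  have hWc_top : Wᗮ ≠ ⊤ := by rwa [Ne, Submodule.orthogonal_eq_top_iff]
  have hsub : ∀ U : Submodule ℂ E, π.IsInvariant U → U ≠ ⊤ → ∀ u ∈ U,
      ε ^ 2 * ‖u‖ ^ 2 ≤ π.energy F u := fun U hU hU_top u hu => by
    simpa [energy_restrict] using ih _ (hd ▸ Submodule.finrank_lt hU_top)
      (hπ0.restrict hU) ⟨u, hu⟩ rfl
  obtain ⟨v₁, hv₁, v₂, hv₂, rfl⟩ : ∃ v₁ ∈ W, ∃ v₂ ∈ Wᗮ, v₁ + v₂ = v :=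
    ⟨_, W.starProjection_apply_mem v, _, W.sub_starProjection_mem_orthogonal v, by abel⟩
  have hpyth : ‖v₁ + v₂‖ ^ 2 = ‖v₁‖ ^ 2 + ‖v₂‖ ^ 2 := by
    simp only [sq]
    exact norm_add_sq_eq_norm_sq_add_norm_sq_of_inner_eq_zero _ _
      (Submodule.inner_right_of_mem_orthogonal hv₁ hv₂)
  rw [energy_add_of_mem_orthogonal F hW hv₁ hv₂, hpyth, mul_add]
  exact add_le_add (hsub W hW hW_top v₁ hv₁) (hsub _ hW.orthogonal hWc_top v₂ hv₂)

end IsolatesTrivial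

section Schur

variable {G : Type*} [Group G] {n : ℕ}

lemma repEquiv_of_mul_eq {σ τ : G →* Matrix.unitaryGroup (Fin n) ℂ}
    (U : Matrix.unitaryGroup (Fin n) ℂ) (hU : ∀ g, U * σ g = τ g * U) : RepEquiv σ τ :=
  ⟨unitaryGroupLinearIsometryEquiv _ U, fun g v => by
    simpa [matAct_eq] using congr($(congrArg (unitaryGroupLinearIsometryEquiv _) (hU g)) v)⟩

lemma IsIrreducibleRep.exists_eq_smul_one {σ : G →* Matrix.unitaryGroup (Fin n) ℂ}
    (hσ : IsIrreducibleRep σ) {B : Matrix (Fin n) (Fin n) ℂ}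
    (hB : ∀ g, (σ g : Matrix (Fin n) (Fin n) ℂ) * B = B * σ g) : ∃ μ : ℂ, B = μ • 1 := by
  rcases isEmpty_or_nonempty (Fin n) with _ | _
  · exact ⟨0, Subsingleton.elim _ _⟩
  let T : Module.End ℂ (EuclideanSpace ℂ (Fin n)) := Matrix.toEuclideanCLM (𝕜 := ℂ) B
  obtain ⟨μ, hμ⟩ := Module.End.exists_eigenvalue T
  have hinv : (toUnitaryRep σ).IsInvariant (T.eigenspace μ) := fun g w hw => by
    rw [Module.End.mem_eigenspace_iff] at hw ⊢
    have := congr(Matrix.toEuclideanCLM (𝕜 := ℂ) $(hB g) w)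
    simp only [map_mul, mul_apply_eq_comp] at this
    have hw' : Matrix.toEuclideanCLM (𝕜 := ℂ) B w = μ • w := hw
    simp [unitaryGroupLinearIsometryEquiv_apply, T, ← this, hw']
  rcases hσ _ hinv with h | h
  · exact absurd h (Module.End.hasEigenvalue_iff.1 hμ)
  refine ⟨μ, Matrix.toEuclideanLin.injective (LinearMap.ext fun w => ?_)⟩
  have hw : w ∈ T.eigenspace μ := h ▸ Submodule.mem_top
  rw [Module.End.mem_eigenspace_iff] at hw
  have hw' : Matrix.toEuclideanLin B w = μ • w := hw
  simpa using hw'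

lemma IsIrreducibleRep.repEquiv_of_mul_eq_mul {σ τ : G →* Matrix.unitaryGroup (Fin n) ℂ}
    (hτ : IsIrreducibleRep τ) {X : Matrix (Fin n) (Fin n) ℂ} (hX : X ≠ 0)
    (hXστ : ∀ g, (τ g : Matrix (Fin n) (Fin n) ℂ) * X = X * σ g) : RepEquiv σ τ := by
  have hXh : ∀ g, Xᴴ * τ g = (σ g : Matrix (Fin n) (Fin n) ℂ) * Xᴴ := fun g => by
    simpa [Matrix.conjTranspose_mul, Matrix.star_eq_conjTranspose] using
      congr_arg Matrix.conjTranspose (hXστ g⁻¹)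
  obtain ⟨μ, hμ⟩ := hτ.exists_eq_smul_one (B := X * Xᴴ) fun g => by
    rw [← mul_assoc, hXστ, mul_assoc, ← hXh, mul_assoc]
  obtain ⟨i, j, hij⟩ : ∃ i j, X i j ≠ 0 := by
    by_contra! h0
    exact hX (Matrix.ext h0)
  set r : ℝ := ∑ k, Complex.normSq (X i k)
  have hr : 0 < r := (Complex.normSq_pos.2 hij).trans_le
    (Finset.single_le_sum (fun k _ => Complex.normSq_nonneg (X i k)) (Finset.mem_univ j))
  have hμr : μ = r := by
    have := congr_fun₂ hμ i i
    simp [Matrix.mul_apply, Complex.mul_conj] at this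
    simp [r, this]
  set M := ((√r)⁻¹ : ℂ) • X
  have hM : M ∈ Matrix.unitaryGroup (Fin n) ℂ := by
    rw [Matrix.mem_unitaryGroup_iff, Matrix.star_eq_conjTranspose]
    have hs : ((√r : ℂ))⁻¹ * (√r : ℂ)⁻¹ * r = 1 := by
      rw [← mul_inv, ← Complex.ofReal_mul, Real.mul_self_sqrt hr.le,
        inv_mul_cancel₀ (by exact_mod_cast hr.ne')]
    simp only [M, Matrix.conjTranspose_smul, Matrix.smul_mul, Matrix.mul_smul, hμ, hμr, smul_smul]
    simp [← mul_assoc, hs]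
  exact repEquiv_of_mul_eq ⟨M, hM⟩ fun g => Subtype.ext (by simp [M, hXστ])

end Schur

section HilbertSchmidt

variable {ι : Type*}

noncomputable def hsVec (X : Matrix ι ι ℂ) : EuclideanSpace ℂ (ι × ι) :=
  WithLp.toLp 2 X.vec

lemma hsVec_injective : Function.Injective (hsVec (ι := ι)) :=
  (WithLp.toLp_injective 2).comp Matrix.vec_bijective.1

lemma hsVec_surjective : Function.Surjective (hsVec (ι := ι)) :=
  (WithLp.toLp_surjective 2).comp Matrix.vec_bijective.2

@[simp] lemma hsVec_sub (X Y : Matrix ι ι ℂ) : hsVec (X - Y) = hsVec X - hsVec Y := rfl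

lemma inner_hsVec [Fintype ι] (X Y : Matrix ι ι ℂ) : ⟪hsVec X, hsVec Y⟫ = (Xᴴ * Y).trace := by
  rw [hsVec, hsVec, EuclideanSpace.inner_eq_star_dotProduct, dotProduct_comm]
  exact Matrix.star_vec_dotProduct_vec X Y

lemma norm_hsVec_sq_of_mem_unitaryGroup [Fintype ι] [DecidableEq ι]
    {U : Matrix ι ι ℂ} (hU : U ∈ Matrix.unitaryGroup ι ℂ) :
    ‖hsVec U‖ ^ 2 = Fintype.card ι := by
  rw [← RCLike.ofReal_inj (K := ℂ), RCLike.ofReal_pow, ← inner_self_eq_norm_sq_to_K, inner_hsVec,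
    ← Matrix.star_eq_conjTranspose, Matrix.UnitaryGroup.star_mul_self ⟨U, hU⟩]
  simp

lemma kronecker_mem_unitaryGroup [Fintype ι] [DecidableEq ι] {A B : Matrix ι ι ℂ}
    (hA : A ∈ Matrix.unitaryGroup ι ℂ) (hB : B ∈ Matrix.unitaryGroup ι ℂ) :
    A ⊗ₖ B ∈ Matrix.unitaryGroup (ι × ι) ℂ := by
  rw [Matrix.mem_unitaryGroup_iff] at hA hB ⊢
  rw [Matrix.star_eq_conjTranspose, Matrix.conjTranspose_kronecker, ← Matrix.mul_kronecker_mul,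
    ← Matrix.star_eq_conjTranspose, ← Matrix.star_eq_conjTranspose, hA, hB,
    Matrix.one_kronecker_one]

noncomputable def conjKronecker [Fintype ι] [DecidableEq ι] :
    Matrix.unitaryGroup ι ℂ × Matrix.unitaryGroup ι ℂ →* Matrix.unitaryGroup (ι × ι) ℂ where
  toFun p := ⟨(p.2 : Matrix ι ι ℂ).map star ⊗ₖ (p.1 : Matrix ι ι ℂ),
    kronecker_mem_unitaryGroup (Matrix.map_star_mem_unitaryGroup_iff.2 p.2.2) p.1.2⟩
  map_one' := Subtype.ext <| by simp
  map_mul' p q := Subtype.ext <| by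
    change ((p.2 * q.2 : Matrix ι ι ℂ).map star) ⊗ₖ (p.1 * q.1 : Matrix ι ι ℂ) = _
    have hstar : ((p.2 * q.2 : Matrix ι ι ℂ).map star) =
        (p.2 : Matrix ι ι ℂ).map star * (q.2 : Matrix ι ι ℂ).map star :=
      Matrix.map_mul (f := starRingEnd ℂ)
    rw [hstar, Matrix.mul_kronecker_mul]
    rfl

lemma unitaryGroupLinearIsometryEquiv_conjKronecker [Fintype ι] [DecidableEq ι]
    (U V : Matrix.unitaryGroup ι ℂ) (X : Matrix ι ι ℂ) :
    unitaryGroupLinearIsometryEquiv _ (conjKronecker (U, V)) (hsVec X) =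
      hsVec ((U : Matrix ι ι ℂ) * X * (V : Matrix ι ι ℂ)ᴴ) := by
  simp [unitaryGroupLinearIsometryEquiv_apply, hsVec, conjKronecker, Matrix.kronecker_mulVec_vec,
    Matrix.conjTranspose, Matrix.transpose_map]

lemma norm_hsVec_mul_mul_conjTranspose [Fintype ι] [DecidableEq ι]
    (U V : Matrix.unitaryGroup ι ℂ) (X : Matrix ι ι ℂ) :
    ‖hsVec ((U : Matrix ι ι ℂ) * X * (V : Matrix ι ι ℂ)ᴴ)‖ = ‖hsVec X‖ := by
  rw [← unitaryGroupLinearIsometryEquiv_conjKronecker, LinearIsometryEquiv.norm_map]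

end HilbertSchmidt

section HomRep

variable {G : Type*} [Group G] {n : ℕ}

noncomputable def homRep (σ τ : G →* Matrix.unitaryGroup (Fin n) ℂ) :
    UnitaryRep G (EuclideanSpace ℂ (Fin n × Fin n)) :=
  toUnitaryRep (conjKronecker.comp (τ.prod σ))

lemma homRep_apply_hsVec (σ τ : G →* Matrix.unitaryGroup (Fin n) ℂ) (g : G)
    (X : Matrix (Fin n) (Fin n) ℂ) :
    homRep σ τ g (hsVec X) = hsVec ((τ g : Matrix (Fin n) (Fin n) ℂ) * X * (σ g : Matrix _ _ ℂ)ᴴ) :=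
  unitaryGroupLinearIsometryEquiv_conjKronecker _ _ X

lemma hasNoInvariantVectors_homRep {σ τ : G →* Matrix.unitaryGroup (Fin n) ℂ}
    (hτ : IsIrreducibleRep τ) (hστ : ¬ RepEquiv σ τ) : (homRep σ τ).HasNoInvariantVectors := by
  intro w hw
  obtain ⟨X, rfl⟩ := hsVec_surjective w
  by_contra hX
  refine hστ (hτ.repEquiv_of_mul_eq_mul (X := X) (by rintro rfl; exact hX rfl) fun g => ?_)
  have hg := hsVec_injective ((homRep_apply_hsVec σ τ g X).symm.trans (hw g))
  have hσ : (σ g : Matrix (Fin n) (Fin n) ℂ)ᴴ * σ g = 1 := Matrix.UnitaryGroup.star_mul_self _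
  calc (τ g : Matrix (Fin n) (Fin n) ℂ) * X
      = τ g * X * ((σ g : Matrix (Fin n) (Fin n) ℂ)ᴴ * σ g) := by rw [hσ, Matrix.mul_one]
    _ = X * σ g := by rw [← Matrix.mul_assoc, hg]

end HomRep

lemma IsolatesTrivial.sq_mul_le_sum_norm_hsVec_sub {G : Type*} [Group G] {F : Finset G} {ε : ℝ}
    (h : IsolatesTrivial F ε) (hε : 0 ≤ ε) {n : ℕ} {σ τ : G →* Matrix.unitaryGroup (Fin n) ℂ}
    (hτ : IsIrreducibleRep τ) (hστ : ¬ RepEquiv σ τ) :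
    ε ^ 2 * n ≤ ∑ x ∈ F, ‖hsVec (σ x : Matrix (Fin n) (Fin n) ℂ) - hsVec (τ x)‖ ^ 2 := by
  have key := h.sq_mul_norm_sq_le_energy hε (hasNoInvariantVectors_homRep hτ hστ) (hsVec 1)
  rw [norm_hsVec_sq_of_mem_unitaryGroup (one_mem _), Fintype.card_fin] at key
  refine key.trans_eq (Finset.sum_congr rfl fun x _ => ?_)
  have hσ : (σ x : Matrix (Fin n) (Fin n) ℂ) * (σ x : Matrix (Fin n) (Fin n) ℂ)ᴴ = 1 :=
    Matrix.mem_unitaryGroup_iff.1 (σ x).2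
  have hY : (τ x : Matrix (Fin n) (Fin n) ℂ) * 1 * (σ x : Matrix _ _ ℂ)ᴴ - 1
      = (τ x - σ x : Matrix (Fin n) (Fin n) ℂ) * (σ x : Matrix _ _ ℂ)ᴴ := by
    rw [Matrix.mul_one, Matrix.sub_mul, hσ]
  rw [homRep_apply_hsVec, ← hsVec_sub, hY, norm_sub_rev, ← hsVec_sub]
  simpa using norm_hsVec_mul_mul_conjTranspose 1 (σ x) (τ x - σ x)

section CoeffVec

variable {G : Type*} [Group G] {n : ℕ}

noncomputable def coeffVec (F : Finset G) (σ : G →* Matrix.unitaryGroup (Fin n) ℂ) :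
    PiLp 2 fun _ : F => EuclideanSpace ℂ (Fin n × Fin n) :=
  WithLp.toLp 2 fun x => hsVec (σ x : Matrix (Fin n) (Fin n) ℂ)

lemma dist_coeffVec_sq (F : Finset G) (σ τ : G →* Matrix.unitaryGroup (Fin n) ℂ) :
    dist (coeffVec F σ) (coeffVec F τ) ^ 2 =
      ∑ x ∈ F, ‖hsVec (σ x : Matrix (Fin n) (Fin n) ℂ) - hsVec (τ x)‖ ^ 2 := by
  rw [PiLp.dist_sq_eq_of_L2, ← Finset.sum_coe_sort F]
  simp [coeffVec, dist_eq_norm]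

lemma norm_coeffVec (F : Finset G) (σ : G →* Matrix.unitaryGroup (Fin n) ℂ) :
    ‖coeffVec F σ‖ = √(F.card * n) := by
  rw [← Real.sqrt_sq (norm_nonneg _), PiLp.norm_sq_eq_of_L2]
  simp [coeffVec, norm_hsVec_sq_of_mem_unitaryGroup]

end CoeffVec

lemma IsolatesTrivial.mul_sqrt_le_dist_coeffVec {G : Type*} [Group G] {F : Finset G} {ε : ℝ}
    (h : IsolatesTrivial F ε) (hε : 0 ≤ ε) {n : ℕ} {σ τ : G →* Matrix.unitaryGroup (Fin n) ℂ}
    (hτ : IsIrreducibleRep τ) (hστ : ¬ RepEquiv σ τ) :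
    ε * √n ≤ dist (coeffVec F σ) (coeffVec F τ) := by
  refine (pow_le_pow_iff_left₀ (by positivity) dist_nonneg two_ne_zero).1 ?_
  rw [mul_pow, Real.sq_sqrt n.cast_nonneg, dist_coeffVec_sq]
  exact h.sq_mul_le_sum_norm_hsVec_sub hε hτ hστ

/-- Let `G` be a (discrete) group.  If some finite `F ⊆ G` and `ε > 0`
isolate the trivial representation among the finite-dimensional irreducible unitary
representations of `G` (in the Fell topology), then for every `n ≥ 1` there are only
finitely many equivalence classes of irreducible representations `G → U(n)`. -/
theorem statement13 {G : Type*} [Group G] (F : Finset G) (ε : ℝ) (hε : 0 < ε)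
    (h : ∀ n : ℕ, 1 ≤ n → ∀ σ : G →* Matrix.unitaryGroup (Fin n) ℂ,
      IsIrreducibleRep σ → σ ≠ 1 →
      ∀ f ∈ posTypeFns σ, ∃ x ∈ F, ε ≤ ‖f x - 1‖) :
    ∀ n : ℕ, 1 ≤ n → ∃ S : Finset (G →* Matrix.unitaryGroup (Fin n) ℂ),
      ∀ σ : G →* Matrix.unitaryGroup (Fin n) ℂ, IsIrreducibleRep σ →
        ∃ τ ∈ S, RepEquiv σ τ := by
  intro n hn
  have hbdd : TotallyBounded
      (coeffVec F '' {σ : G →* Matrix.unitaryGroup (Fin n) ℂ | IsIrreducibleRep σ}) :=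
    (isCompact_sphere 0 √(F.card * n)).totallyBounded.subset <| by
      rintro _ ⟨σ, -, rfl⟩
      simp [norm_coeffVec]
  exact exists_finset_forall_exists_of_totallyBounded (coeffVec F) hbdd
    (δ := ε * √n) (by positivity) fun σ _ τ hτ hστ =>
      IsolatesTrivial.mul_sqrt_le_dist_coeffVec h hε.le hτ hστ
end
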